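/- The constructions g ↦ (g, xy = ([x,y]+[y,x])/2, {x,y} = ([x,y]-[y,x])/2) and m ↦ (m, [x,y] = xy + {x,y}) are mutually inverse, giving an isomorphism (equivalence) between the category of Ronco algebras and the category of μ-algebras over a field of characteristic ≠ 2. Under this correspondence, symmetric Leibniz algebras correspond exactly to symmetric μ-algebras. -/
import Mathlib

private lemma aux_smul_cancel {K : Type*} [Field K] {V : Type*} [AddCommGroup V] [Module K V]
    {a : K} (ha : a ≠ 0) {v : V} (h : a • v = 0) : v = 0 := by
  have := congrArg (fun w => a⁻¹ • w) h
  simpa [smul_smul, inv_mul_cancel₀ ha] using this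

/-- The constructions `g ↦ (xy = ([x,y]+[y,x])/2, {x,y} = ([x,y]-[y,x])/2)` and
`m ↦ ([x,y] = xy + {x,y})` are mutually inverse, giving an isomorphism between Ronco
algebras and μ-algebras over a field of characteristic ≠ 2 (a linear map is a Ronco
morphism iff it is a μ-morphism for the derived operations); symmetric Leibniz algebras
correspond exactly to symmetric μ-algebras. -/
theorem stmt_14.{u} {K : Type*} [Field K] (h2 : (2 : K) ≠ 0) :
    -- From Ronco algebras to μ-algebras, and back.
    (∀ (V : Type u) [AddCommGroup V] [Module K V] (b : V →ₗ[K] V →ₗ[K] V),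
      (∀ x y z : V, b x (b y z) = b (b x y) z - b (b x z) y) →
      (∀ x y : V, b (b x x) y = 0) →
      ((∀ x y : V, ((2:K)⁻¹ • (b x y + b y x)) = ((2:K)⁻¹ • (b y x + b x y))) ∧
       (∀ x y z : V,
          ((2:K)⁻¹ • (b x ((2:K)⁻¹ • (b y z + b z y)) + b ((2:K)⁻¹ • (b y z + b z y)) x)) = 0 ∧
          ((2:K)⁻¹ • (b ((2:K)⁻¹ • (b x y + b y x)) z + b z ((2:K)⁻¹ • (b x y + b y x)))) = 0) ∧
       (∀ x : V, ((2:K)⁻¹ • (b x x - b x x)) = 0) ∧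
       (∀ x y z : V,
          ((2:K)⁻¹ • (b ((2:K)⁻¹ • (b x y + b y x)) z - b z ((2:K)⁻¹ • (b x y + b y x)))) = 0) ∧
       (∀ x y z : V,
          ((2:K)⁻¹ • (b x ((2:K)⁻¹ • (b y z - b z y)) - b ((2:K)⁻¹ • (b y z - b z y)) x)) +
          ((2:K)⁻¹ • (b z ((2:K)⁻¹ • (b x y - b y x)) - b ((2:K)⁻¹ • (b x y - b y x)) z)) +
          ((2:K)⁻¹ • (b y ((2:K)⁻¹ • (b z x - b x z)) - b ((2:K)⁻¹ • (b z x - b x z)) y)) =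
          ((2:K)⁻¹ • (b x ((2:K)⁻¹ • (b y z - b z y)) + b ((2:K)⁻¹ • (b y z - b z y)) x))) ∧
       -- the round trip recovers the original bracket
       (∀ x y : V, ((2:K)⁻¹ • (b x y + b y x)) + ((2:K)⁻¹ • (b x y - b y x)) = b x y) ∧
       -- symmetric Leibniz algebras correspond to symmetric μ-algebras
       ((∀ x y z : V, b (b x y) z = b x (b y z) - b y (b x z)) ↔
        (∀ x y z : V,
          ((2:K)⁻¹ • (b x ((2:K)⁻¹ • (b y z - b z y)) + b ((2:K)⁻¹ • (b y z - b z y)) x)) = 0)))) ∧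
    -- From μ-algebras to Ronco algebras, and back.
    (∀ (V : Type u) [AddCommGroup V] [Module K V]
        (m : V →ₗ[K] V →ₗ[K] V) (br : V →ₗ[K] V →ₗ[K] V),
      (∀ x y : V, m x y = m y x) →
      (∀ x y z : V, m x (m y z) = 0 ∧ m (m x y) z = 0) →
      (∀ x : V, br x x = 0) →
      (∀ x y z : V, br (m x y) z = 0) →
      (∀ x y z : V, br x (br y z) + br z (br x y) + br y (br z x) = m x (br y z)) →
      ((∀ x y z : V,
          (m x (m y z + br y z) + br x (m y z + br y z)) =
            (m (m x y + br x y) z + br (m x y + br x y) z) -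
            (m (m x z + br x z) y + br (m x z + br x z) y)) ∧
       (∀ x y : V, (m (m x x + br x x) y + br (m x x + br x x) y) = 0) ∧
       -- the round trip recovers the original operations
       (∀ x y : V, (2:K)⁻¹ • ((m x y + br x y) + (m y x + br y x)) = m x y) ∧
       (∀ x y : V, (2:K)⁻¹ • ((m x y + br x y) - (m y x + br y x)) = br x y) ∧
       -- symmetric μ-algebras correspond to symmetric Leibniz algebras
       ((∀ x y z : V, m x (br y z) = 0) ↔
        (∀ x y z : V,
          (m (m x y + br x y) z + br (m x y + br x y) z) =
            (m x (m y z + br y z) + br x (m y z + br y z)) -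
            (m y (m x z + br x z) + br y (m x z + br x z))))) ∧
    -- Correspondence of morphisms.
    (∀ (V : Type u) [AddCommGroup V] [Module K V]
       (W : Type u) [AddCommGroup W] [Module K W]
       (b : V →ₗ[K] V →ₗ[K] V) (c : W →ₗ[K] W →ₗ[K] W) (f : V →ₗ[K] W),
      (∀ x y z : V, b x (b y z) = b (b x y) z - b (b x z) y) →
      (∀ x y : V, b (b x x) y = 0) →
      (∀ x y z : W, c x (c y z) = c (c x y) z - c (c x z) y) →
      (∀ x y : W, c (c x x) y = 0) →
      ((∀ x y : V, f (b x y) = c (f x) (f y)) ↔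
       ((∀ x y : V, f ((2:K)⁻¹ • (b x y + b y x)) = (2:K)⁻¹ • (c (f x) (f y) + c (f y) (f x))) ∧
        (∀ x y : V, f ((2:K)⁻¹ • (b x y - b y x)) = (2:K)⁻¹ • (c (f x) (f y) - c (f y) (f x)))))) ) := by
  refine ⟨?_, ?_⟩
  · -- Part 1 : Ronco → μ
    intro V _ _ b hL hR
    have L1 : ∀ x y z : V, b x (b z y) = - b x (b y z) := by
      intro x y z
      rw [hL x y z, hL x z y]; abel
    have L2 : ∀ x y z : V, b (b z y) x = - b (b y z) x := by
      intro x y z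
      have h := hR (y + z) x
      simp only [map_add, LinearMap.add_apply, hR, zero_add, add_zero] at h
      linear_combination (norm := module) h
    have Z1 : ∀ x y z : V, b x (b y z + b z y) = 0 := by
      intro x y z
      rw [map_add, L1 x y z]; abel
    have Z2 : ∀ x y z : V, b (b y z + b z y) x = 0 := by
      intro x y z
      rw [map_add, LinearMap.add_apply, L2 x y z]; abel
    refine ⟨?_, ?_, ?_, ?_, ?_, ?_, ?_⟩
    · intro x y; rw [add_comm (b x y) (b y x)]
    · intro x y z
      constructor
      · simp only [map_smul, LinearMap.smul_apply, Z1, Z2, smul_zero, add_zero]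
      · simp only [map_smul, LinearMap.smul_apply, Z1, Z2, smul_zero, add_zero]
    · intro x; simp
    · intro x y z
      simp only [map_smul, LinearMap.smul_apply, Z1, Z2, smul_zero, sub_zero, sub_self]
    · intro x y z
      simp only [map_smul, map_sub, LinearMap.smul_apply, LinearMap.sub_apply]
      linear_combination (norm := module) ((2:K)⁻¹ * (2:K)⁻¹) •
        (hL z x y - hL z y x + hL y z x - hL y x z - L2 z x y + L2 y z x)
    · intro x y
      rw [← smul_add,
        show (b x y + b y x) + (b x y - b y x) = (2:K) • (b x y) by rw [two_smul]; abel,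
        smul_smul, inv_mul_cancel₀ h2, one_smul]
    · constructor
      · intro hLL
        have S : ∀ x y z : V, b (b x y) z + b (b y z) x + b (b z x) y = 0 := by
          intro x y z
          linear_combination (norm := module)
            (- hLL y z x - hL y z x + hL z y x + L2 x y z + L2 z x y)
        intro x y z
        simp only [map_smul, map_sub, LinearMap.smul_apply, LinearMap.sub_apply]
        linear_combination (norm := module) ((2:K)⁻¹ * (2:K)⁻¹) •
          ((2:K) • S x y z + hL x y z - hL x z y - L2 x y z - (2:K) • L2 y z x)
      · intro hμ
        have C : ∀ x y z : V, b x (b y z) + b (b y z) x = 0 := by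
          intro x y z
          have h1 := aux_smul_cancel (inv_ne_zero h2) (hμ x y z)
          rw [map_smul, map_smul, LinearMap.smul_apply, ← smul_add] at h1
          have h2'' := aux_smul_cancel (inv_ne_zero h2) h1
          simp only [map_sub, LinearMap.sub_apply] at h2''
          have hg : (2:K) • (b x (b y z) + b (b y z) x) = 0 := by
            linear_combination (norm := module) h2'' + L1 x y z + L2 x y z
          exact aux_smul_cancel h2 hg
        intro x y z
        linear_combination (norm := module)
          (C z x y - hL z x y - C x y z + C y x z - L2 y z x + L2 x y z)
  · -- Part 2 : μ → Ronco
    intro V _ _ m br hcomm hassoc halt hmul hjac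
    have ha : ∀ x y : V, br y x = - br x y := by
      intro x y
      have h := halt (x + y)
      simp only [map_add, LinearMap.add_apply, halt, zero_add, add_zero] at h
      linear_combination (norm := module) h
    have hm2 : ∀ x y z : V, br x (m y z) = 0 := by
      intro x y z
      rw [ha (m y z) x, hmul y z x, neg_zero]
    have hcyc : ∀ x y z : V, m z (br x y) = m x (br y z) := by
      intro x y z
      linear_combination (norm := module) (hjac x y z - hjac z x y)
    refine ⟨⟨?_, ?_, ?_, ?_, ?_⟩, ?_⟩
    · intro x y z
      have e3 : br y (br z x) = - br y (br x z) := by rw [ha x z, map_neg]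
      have f5 : m x (br z y) = - m x (br y z) := by rw [ha y z, map_neg]
      simp only [map_add, LinearMap.add_apply]
      linear_combination (norm := module) (hjac x y z + (hassoc x y z).1 - (hassoc x y z).2
        + (hassoc x z y).2 + hm2 x y z - hmul x y z + hmul x z y - ha z (br x y)
        + ha y (br x z) - e3 - hcomm (br x y) z - hcyc x y z + hcomm (br x z) y
        + hcyc x z y + f5)
    · intro x y
      rw [halt x, add_zero, (hassoc x x y).2, hmul x x y, add_zero]
    · intro x y
      rw [hcomm y x, ha x y,
        show (m x y + br x y) + (m x y + -br x y) = (2:K) • (m x y) by rw [two_smul]; abel,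
        smul_smul, inv_mul_cancel₀ h2, one_smul]
    · intro x y
      rw [hcomm y x, ha x y,
        show (m x y + br x y) - (m x y + -br x y) = (2:K) • (br x y) by rw [two_smul]; abel,
        smul_smul, inv_mul_cancel₀ h2, one_smul]
    · constructor
      · intro hsym x y z
        have e3 : br y (br z x) = - br y (br x z) := by rw [ha x z, map_neg]
        simp only [map_add, LinearMap.add_apply]
        linear_combination (norm := module) ((hassoc x y z).2 + hmul x y z
          - (hassoc x y z).1 - hm2 x y z + (hassoc y x z).1 + hm2 y x z
          + hcomm (br x y) z + hcyc x y z - hsym x y z + hsym y x z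
          - hjac x y z + ha z (br x y) + e3)
      · intro hsymL x y z
        have e3 : br y (br z x) = - br y (br x z) := by rw [ha x z, map_neg]
        have f5 : m x (br z y) = - m x (br y z) := by rw [ha y z, map_neg]
        have h := hsymL x y z
        simp only [map_add, LinearMap.add_apply] at h
        have hg : (2:K) • (m x (br y z)) = 0 := by
          linear_combination (norm := module) (- h + (hassoc x y z).2 + hmul x y z
            - (hassoc x y z).1 - hm2 x y z + (hassoc y x z).1 + hm2 y x z
            + hcomm (br x y) z + hcyc x y z + hcyc x z y + f5
            - hjac x y z + ha z (br x y) + e3)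
        exact aux_smul_cancel h2 hg
    · -- Part 3 : morphisms
      intro V2 _ _ W _ _ b c f hbL hbR hcL hcR
      constructor
      · intro hf
        constructor
        · intro x y
          simp only [map_smul, map_add, hf]
        · intro x y
          simp only [map_smul, map_sub, hf]
      · rintro ⟨hs, hA⟩ x y
        have key : f (b x y) = f ((2:K)⁻¹ • (b x y + b y x)) + f ((2:K)⁻¹ • (b x y - b y x)) := by
          rw [← map_add, ← smul_add,
            show (b x y + b y x) + (b x y - b y x) = (2:K) • (b x y) by rw [two_smul]; abel,
            smul_smul, inv_mul_cancel₀ h2, one_smul]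
        rw [key, hs x y, hA x y, ← smul_add,
          show (c (f x) (f y) + c (f y) (f x)) + (c (f x) (f y) - c (f y) (f x)) =
            (2:K) • (c (f x) (f y)) by rw [two_smul]; abel,
          smul_smul, inv_mul_cancel₀ h2, one_smul]
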